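/- arXiv:2308.01490 — 3 statements merged into one kernel-verified Lean document; each statement's English description precedes it below -/
import Mathlib

section
/- Let X_1, ..., X_n be {0,1}-valued random variables forming a sequence such that for each i and any values x_1,...,x_i, P(X_{i+1} = 1 | X_1 = x_1, ..., X_i = x_i) ≥ p. Then for any real λ > 0, E[exp(-λ ∑_{i=1}^n X_i)] ≤ (p e^{-λ} + 1 - p)^n. -/
/-!
Fix a history `x` of the first `m` coordinates. Splitting the event that it occurs according to the
value of `X m`, the summand `X m` contributes a factor `1` on `{X m = 0}` and `e^{-λ}` on
`{X m = 1}`; since the latter has conditional probability at least `p`, the tail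
`exp (-λ ∑_{m ≤ i < n} X i)` integrates over the history to at most `(p e^{-λ} + 1 - p) ^ (n - m)`
times its probability. Backward induction on `m` down to the empty history gives the bound.
-/

open MeasureTheory Set Real

section

variable {Ω : Type*} {X : ℕ → Ω → ℝ}

def historySet (X : ℕ → Ω → ℝ) (m : ℕ) (x : ℕ → ℝ) : Set Ω := {ω | ∀ j < m, X j ω = x j}

@[simp]
lemma historySet_zero (X : ℕ → Ω → ℝ) (x : ℕ → ℝ) : historySet X 0 x = univ := by
  simp [historySet]

lemma historySet_succ_update (X : ℕ → Ω → ℝ) (m : ℕ) (x : ℕ → ℝ) (b : ℝ) :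
    historySet X (m + 1) (Function.update x m b) = historySet X m x ∩ {ω | X m ω = b} := by
  ext ω
  simp only [historySet, mem_ofPred_eq, mem_inter_iff, Nat.lt_succ_iff_lt_or_eq, or_imp,
    forall_and, forall_eq, Function.update_self]
  refine and_congr_left' (forall₂_congr fun j hj => ?_)
  rw [Function.update_of_ne hj.ne]

variable [MeasurableSpace Ω] {μ : Measure Ω}

lemma measurableSet_historySet (hX : ∀ i, Measurable (X i)) (m : ℕ) (x : ℕ → ℝ) :
    MeasurableSet (historySet X m x) := by
  simp only [historySet, ofPred_forall]
  exact .iInter fun j => .iInter fun _ => measurableSet_eq_fun (hX j) measurable_const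

lemma mul_measureReal_le_of_ofReal_mul_le [IsFiniteMeasure μ] {p : ℝ} {s t : Set Ω}
    (h : ENNReal.ofReal p * μ s ≤ μ t) : p * μ.real s ≤ μ.real t :=
  calc p * μ.real s ≤ (ENNReal.ofReal p).toReal * μ.real s := by
        gcongr
        exact le_max_left p 0
    _ ≤ μ.real t := by
        rw [measureReal_def, ← ENNReal.toReal_mul]
        exact ENNReal.toReal_mono (measure_ne_top μ t) h

lemma integrable_exp_neg_mul_sum [IsFiniteMeasure μ] (hX : ∀ i, Measurable (X i))
    (hX0 : ∀ i ω, 0 ≤ X i ω) {lam : ℝ} (hlam : 0 ≤ lam) (s : Finset ℕ) :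
    Integrable (fun ω => exp (-lam * ∑ i ∈ s, X i ω)) μ := by
  refine .of_bound (by fun_prop) 1 (.of_forall fun ω => ?_)
  have : 0 ≤ lam * ∑ i ∈ s, X i ω := mul_nonneg hlam (Finset.sum_nonneg fun i _ => hX0 i ω)
  rw [norm_of_nonneg (exp_pos _).le, exp_le_one_iff]
  linarith

lemma setIntegral_exp_neg_mul_sum_Ico_eq [IsFiniteMeasure μ] {n m : ℕ} {lam : ℝ} {A : Set Ω}
    (hX : ∀ i, Measurable (X i)) (hval : ∀ i ω, X i ω = 0 ∨ X i ω = 1) (hlam : 0 ≤ lam)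
    (hA : MeasurableSet A) (hm : m < n) :
    ∫ ω in A, exp (-lam * ∑ i ∈ Finset.Ico m n, X i ω) ∂μ
      = exp (-lam) * ∫ ω in A ∩ {ω | X m ω = 1}, exp (-lam * ∑ i ∈ Finset.Ico (m + 1) n, X i ω) ∂μ
        + ∫ ω in A \ {ω | X m ω = 1}, exp (-lam * ∑ i ∈ Finset.Ico (m + 1) n, X i ω) ∂μ := by
  have hB : MeasurableSet {ω | X m ω = 1} := measurableSet_eq_fun (hX m) measurable_const
  have hX0 i ω : 0 ≤ X i ω := by rcases hval i ω with h | h <;> simp [h]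
  have hhead ω : exp (-lam * ∑ i ∈ Finset.Ico m n, X i ω)
      = exp (-lam * X m ω) * exp (-lam * ∑ i ∈ Finset.Ico (m + 1) n, X i ω) := by
    rw [Finset.sum_eq_sum_Ico_succ_bot hm, mul_add, exp_add]
  rw [← integral_inter_add_sdiff hB (integrable_exp_neg_mul_sum hX hX0 hlam _).integrableOn,
    ← integral_const_mul]
  congr 1
  · refine setIntegral_congr_fun (hA.inter hB) fun ω hω => ?_
    have h1 : X m ω = 1 := hω.2
    rw [hhead, h1, mul_one]
  · refine setIntegral_congr_fun (hA.diff hB) fun ω hω => ?_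
    have h0 : X m ω = 0 := (hval m ω).resolve_right hω.2
    rw [hhead, h0, mul_zero, exp_zero, one_mul]

lemma setIntegral_historySet_exp_neg_mul_sum_Ico_le [IsFiniteMeasure μ] {n : ℕ} {p lam : ℝ}
    (hX : ∀ i, Measurable (X i)) (hval : ∀ i ω, X i ω = 0 ∨ X i ω = 1) (hp1 : p ≤ 1)
    (hcond : ∀ i < n, ∀ x : ℕ → ℝ,
      ENNReal.ofReal p * μ (historySet X i x) ≤ μ ({ω | X i ω = 1} ∩ historySet X i x))
    (hlam : 0 ≤ lam) {m : ℕ} (hm : m ≤ n) (x : ℕ → ℝ) :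
    ∫ ω in historySet X m x, exp (-lam * ∑ i ∈ Finset.Ico m n, X i ω) ∂μ
      ≤ (p * exp (-lam) + 1 - p) ^ (n - m) * μ.real (historySet X m x) := by
  induction hm using Nat.decreasingInduction generalizing x with
  | self => simp
  | of_succ m hm ih =>
    set A := historySet X m x
    set B := {ω | X m ω = 1}
    set e := exp (-lam)
    set r := (p * e + 1 - p) ^ (n - (m + 1))
    have hB : MeasurableSet B := measurableSet_eq_fun (hX m) measurable_const
    have ih1 : ∫ ω in A ∩ B, exp (-lam * ∑ i ∈ Finset.Ico (m + 1) n, X i ω) ∂μ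
        ≤ r * μ.real (A ∩ B) := by
      simpa only [historySet_succ_update] using ih (Function.update x m 1)
    have ih0 : ∫ ω in A \ B, exp (-lam * ∑ i ∈ Finset.Ico (m + 1) n, X i ω) ∂μ
        ≤ r * μ.real (A \ B) := by
      have hAB : historySet X (m + 1) (Function.update x m 0) = A \ B := by
        rw [historySet_succ_update, sdiff_eq]
        congr 1
        ext ω
        rcases hval m ω with h | h <;> simp [B, h]
      simpa only [hAB] using ih (Function.update x m 0)
    have hpA : p * (μ.real (A ∩ B) + μ.real (A \ B)) ≤ μ.real (A ∩ B) := by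
      rw [measureReal_inter_add_sdiff hB, inter_comm]
      exact mul_measureReal_le_of_ofReal_mul_le (hcond m hm x)
    have he1 : e ≤ 1 := exp_le_one_iff.2 (by linarith)
    have hr : 0 ≤ r := pow_nonneg (by nlinarith [exp_pos (-lam)]) _
    rw [setIntegral_exp_neg_mul_sum_Ico_eq hX hval hlam (measurableSet_historySet hX m x) hm,
      ← measureReal_inter_add_sdiff hB, show n - m = n - (m + 1) + 1 by omega, pow_succ]
    calc _ ≤ e * (r * μ.real (A ∩ B)) + r * μ.real (A \ B) := by gcongr
      _ = r * (e * μ.real (A ∩ B) + μ.real (A \ B)) := by ring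
      _ ≤ r * ((p * e + 1 - p) * (μ.real (A ∩ B) + μ.real (A \ B))) := by
          gcongr
          nlinarith [mul_le_mul_of_nonneg_left hpA (sub_nonneg.2 he1)]
      _ = _ := by ring

end

theorem stmt0_general {Ω : Type*} [MeasurableSpace Ω] (μ : Measure Ω) [IsProbabilityMeasure μ]
    (n : ℕ) (X : ℕ → Ω → ℝ) (hX : ∀ i, Measurable (X i))
    (hval : ∀ i ω, X i ω = 0 ∨ X i ω = 1)
    (p : ℝ) (hp1 : p ≤ 1)
    (hcond : ∀ i, i < n → ∀ x : ℕ → ℝ,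
      ENNReal.ofReal p * μ {ω | ∀ j < i, X j ω = x j}
        ≤ μ ({ω | X i ω = 1} ∩ {ω | ∀ j < i, X j ω = x j}))
    (lam : ℝ) (hlam : 0 < lam) :
    ∫ ω, Real.exp (-lam * ∑ i ∈ Finset.range n, X i ω) ∂μ
      ≤ (p * Real.exp (-lam) + 1 - p) ^ n := by
  have h := setIntegral_historySet_exp_neg_mul_sum_Ico_le (μ := μ) hX hval hp1 hcond hlam.le
    n.zero_le 0
  rwa [historySet_zero, Measure.restrict_univ, probReal_univ, mul_one, Nat.sub_zero,
    ← Finset.range_eq_Ico] at h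

/-- Extension of the Chernoff MGF bound to sequentially dependent {0,1}-valued
random variables: if the conditional probability that `X (i+1) = 1` given any
history of values of `X 0, ..., X i` is at least `p`, then for any `λ > 0`,
`E[exp (-λ ∑ X i)] ≤ (p e^{-λ} + 1 - p)^n`. -/
theorem stmt0 {Ω : Type*} [MeasurableSpace Ω] (μ : Measure Ω) [IsProbabilityMeasure μ]
    (n : ℕ) (X : ℕ → Ω → ℝ) (hX : ∀ i, Measurable (X i))
    (hval : ∀ i ω, X i ω = 0 ∨ X i ω = 1)
    (p : ℝ) (hp0 : 0 ≤ p) (hp1 : p ≤ 1)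
    (hcond : ∀ i, i < n → ∀ x : ℕ → ℝ,
      ENNReal.ofReal p * μ {ω | ∀ j < i, X j ω = x j}
        ≤ μ ({ω | X i ω = 1} ∩ {ω | ∀ j < i, X j ω = x j}))
    (lam : ℝ) (hlam : 0 < lam) :
    ∫ ω, Real.exp (-lam * ∑ i ∈ Finset.range n, X i ω) ∂μ
      ≤ (p * Real.exp (-lam) + 1 - p) ^ n :=
  stmt0_general μ n X hX hval p hp1 hcond lam hlam
end

section
/- Let X_1, ..., X_n be {0,1}-valued random variables such that P(X_{i+1} = 1 | X_1, ..., X_i) ≥ p almost surely for every i. Then for any integer k with k ≤ np, P(∑_{i=1}^n X_i < k) ≤ e^{-np} (e n p / k)^k. -/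
/-!
Chernoff's method. Fix `t ≥ 0`. On every history cylinder `{X 0 = x 0, …, X (i-1) = x (i-1)}` the
event `X i = 1` has relative mass at least `p`, so peeling off the factor `e^{-t X i}` multiplies
the integral of `e^{-t ∑_{i ≤ j < n} X j}` over the cylinder by at most `q = 1 - (1 - e^{-t}) p`.
Backward induction on `i` gives `E[e^{-t S}] ≤ q^n`, Markov's inequality gives
`P(S < k) ≤ e^{tk} q^n`, and the choice `e^t = np/k` together with `1 + x ≤ e^x` yields the bound.
-/

open MeasureTheory

open scoped ENNReal

open Finset Real

section History

variable {Ω : Type*}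

def history (X : ℕ → Ω → ℝ) (i : ℕ) (x : ℕ → ℝ) : Set Ω := {ω | ∀ j < i, X j ω = x j}

theorem measurableSet_history [MeasurableSpace Ω] {X : ℕ → Ω → ℝ}
    (hX : ∀ i, Measurable (X i)) (i : ℕ) (x : ℕ → ℝ) : MeasurableSet (history X i x) := by
  have : history X i x = ⋂ j ∈ Set.Iio i, X j ⁻¹' {x j} := by
    ext ω; simp [history]
  rw [this]
  exact .biInter (Set.to_countable _) fun j _ => hX j (measurableSet_singleton _)

@[simp]
theorem history_zero (X : ℕ → Ω → ℝ) (x : ℕ → ℝ) : history X 0 x = Set.univ := by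
  simp [history]

theorem history_succ_update (X : ℕ → Ω → ℝ) (i : ℕ) (x : ℕ → ℝ) (v : ℝ) :
    history X (i + 1) (Function.update x i v) = history X i x ∩ {ω | X i ω = v} := by
  ext ω
  simp only [history, Set.mem_ofPred_eq, Set.mem_inter_iff, Nat.lt_succ_iff_lt_or_eq, or_imp,
    forall_and, forall_eq]
  constructor
  · rintro ⟨hlt, hi⟩
    exact ⟨fun j hj => by simpa [hj.ne] using hlt j hj, by simpa using hi⟩
  · rintro ⟨hlt, hi⟩
    exact ⟨fun j hj => by simpa [hj.ne] using hlt j hj, by simpa using hi⟩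

theorem history_sdiff_eq_history_succ_update_zero {X : ℕ → Ω → ℝ}
    (hval : ∀ i ω, X i ω = 0 ∨ X i ω = 1) (i : ℕ) (x : ℕ → ℝ) :
    history X i x \ {ω | X i ω = 1} = history X (i + 1) (Function.update x i 0) := by
  ext ω
  rw [history_succ_update, Set.mem_sdiff, Set.mem_inter_iff]
  rcases hval i ω with h | h <;> simp [h]

end History

theorem ofReal_mul_add_le_of_ofReal_mul_le {a b : ℝ≥0∞} {c p : ℝ} (hc0 : 0 ≤ c) (hc1 : c ≤ 1)
    (hp0 : 0 ≤ p) (hp1 : p ≤ 1) (ha : a ≠ ∞) (hb : b ≠ ∞) (h : ENNReal.ofReal p * (a + b) ≤ a) :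
    ENNReal.ofReal c * a + b ≤ ENNReal.ofReal (1 - (1 - c) * p) * (a + b) := by
  have hreal : p * (a.toReal + b.toReal) ≤ a.toReal := by
    simpa [ENNReal.toReal_mul, hp0, ENNReal.toReal_add ha hb] using ENNReal.toReal_mono ha h
  have hq : 0 ≤ 1 - (1 - c) * p := by nlinarith
  rw [← ENNReal.ofReal_toReal ha, ← ENNReal.ofReal_toReal hb, ← ENNReal.ofReal_mul hc0,
    ← ENNReal.ofReal_add (by positivity) ENNReal.toReal_nonneg,
    ← ENNReal.ofReal_add ENNReal.toReal_nonneg ENNReal.toReal_nonneg, ← ENNReal.ofReal_mul hq]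
  exact ENNReal.ofReal_le_ofReal (by nlinarith [ENNReal.toReal_nonneg (a := a)])

section Chernoff

variable {Ω : Type*} [MeasurableSpace Ω] {μ : Measure Ω} {X : ℕ → Ω → ℝ} {n : ℕ} {p t : ℝ}

theorem setLIntegral_history_exp_neg_mul_sum_eq (hX : ∀ i, Measurable (X i))
    (hval : ∀ i ω, X i ω = 0 ∨ X i ω = 1) {i : ℕ} (hi : i < n) (x : ℕ → ℝ) :
    ∫⁻ ω in history X i x, ENNReal.ofReal (exp (-t * ∑ j ∈ Ico i n, X j ω)) ∂μ =
      ENNReal.ofReal (exp (-t)) * ∫⁻ ω in history X (i + 1) (Function.update x i 1),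
          ENNReal.ofReal (exp (-t * ∑ j ∈ Ico (i + 1) n, X j ω)) ∂μ +
        ∫⁻ ω in history X (i + 1) (Function.update x i 0),
          ENNReal.ofReal (exp (-t * ∑ j ∈ Ico (i + 1) n, X j ω)) ∂μ := by
  have hB : MeasurableSet {ω | X i ω = 1} := hX i (measurableSet_singleton 1)
  have hsum : ∀ ω, ENNReal.ofReal (exp (-t * ∑ j ∈ Ico i n, X j ω)) =
      ENNReal.ofReal (exp (-t * X i ω)) *
        ENNReal.ofReal (exp (-t * ∑ j ∈ Ico (i + 1) n, X j ω)) := fun ω => by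
    rw [sum_eq_sum_Ico_succ_bot hi, mul_add, exp_add, ENNReal.ofReal_mul (exp_pos _).le]
  rw [← lintegral_inter_add_sdiff _ _ hB, history_sdiff_eq_history_succ_update_zero hval,
    ← history_succ_update, ← lintegral_const_mul' _ _ ENNReal.ofReal_ne_top]
  congr 1 <;> refine setLIntegral_congr_fun (measurableSet_history hX _ _) fun ω hω => ?_
  all_goals rw [history_succ_update] at hω
  · rw [hsum ω, show X i ω = 1 from hω.2, mul_one]
  · rw [hsum ω, show X i ω = 0 from hω.2, mul_zero, exp_zero, ENNReal.ofReal_one, one_mul]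

theorem setLIntegral_history_exp_neg_mul_sum_le [IsFiniteMeasure μ]
    (hX : ∀ i, Measurable (X i)) (hval : ∀ i ω, X i ω = 0 ∨ X i ω = 1)
    (hp0 : 0 ≤ p) (hp1 : p ≤ 1)
    (hcond : ∀ i, i < n → ∀ x : ℕ → ℝ,
      ENNReal.ofReal p * μ (history X i x) ≤ μ ({ω | X i ω = 1} ∩ history X i x))
    (ht : 0 ≤ t) {i : ℕ} (hi : i ≤ n) (x : ℕ → ℝ) :
    ∫⁻ ω in history X i x, ENNReal.ofReal (exp (-t * ∑ j ∈ Ico i n, X j ω)) ∂μ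
      ≤ ENNReal.ofReal (1 - (1 - exp (-t)) * p) ^ (n - i) * μ (history X i x) := by
  induction hi using Nat.decreasingInduction generalizing x with
  | self => simp
  | of_succ i hi ih =>
    set q := ENNReal.ofReal (1 - (1 - exp (-t)) * p)
    set H₁ := history X (i + 1) (Function.update x i 1)
    set H₀ := history X (i + 1) (Function.update x i 0)
    have hH₁ : H₁ = {ω | X i ω = 1} ∩ history X i x :=
      (history_succ_update X i x 1).trans (Set.inter_comm _ _)
    have hB : MeasurableSet {ω | X i ω = 1} := hX i (measurableSet_singleton 1)
    have hsplit : μ H₁ + μ H₀ = μ (history X i x) := by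
      have := measure_inter_add_sdiff (μ := μ) (history X i x) hB
      rwa [history_sdiff_eq_history_succ_update_zero hval, ← history_succ_update] at this
    have hstep : ENNReal.ofReal (exp (-t)) * μ H₁ + μ H₀ ≤ q * (μ H₁ + μ H₀) :=
      ofReal_mul_add_le_of_ofReal_mul_le (exp_pos _).le (exp_le_one_iff.mpr (by linarith))
        hp0 hp1 (measure_ne_top _ _) (measure_ne_top _ _) (by
          rw [hsplit, hH₁]; exact hcond i hi x)
    calc _ = ENNReal.ofReal (exp (-t)) *
            ∫⁻ ω in H₁, ENNReal.ofReal (exp (-t * ∑ j ∈ Ico (i + 1) n, X j ω)) ∂μ +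
          ∫⁻ ω in H₀, ENNReal.ofReal (exp (-t * ∑ j ∈ Ico (i + 1) n, X j ω)) ∂μ :=
          setLIntegral_history_exp_neg_mul_sum_eq hX hval hi x
      _ ≤ ENNReal.ofReal (exp (-t)) * (q ^ (n - (i + 1)) * μ H₁) + q ^ (n - (i + 1)) * μ H₀ := by
          gcongr <;> exact ih _
      _ = q ^ (n - (i + 1)) * (ENNReal.ofReal (exp (-t)) * μ H₁ + μ H₀) := by ring
      _ ≤ q ^ (n - (i + 1)) * (q * (μ H₁ + μ H₀)) := by gcongr
      _ = q ^ (n - i) * μ (history X i x) := by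
          rw [hsplit, ← mul_assoc, ← pow_succ, show n - (i + 1) + 1 = n - i by omega]

theorem measure_sum_lt_le_ofReal_exp_mul [IsProbabilityMeasure μ]
    (hX : ∀ i, Measurable (X i)) (hval : ∀ i ω, X i ω = 0 ∨ X i ω = 1)
    (hp0 : 0 ≤ p) (hp1 : p ≤ 1)
    (hcond : ∀ i, i < n → ∀ x : ℕ → ℝ,
      ENNReal.ofReal p * μ (history X i x) ≤ μ ({ω | X i ω = 1} ∩ history X i x))
    (ht : 0 ≤ t) (k : ℝ) :
    μ {ω | ∑ i ∈ range n, X i ω < k}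
      ≤ ENNReal.ofReal (exp (t * k) * (1 - (1 - exp (-t)) * p) ^ n) := by
  have hq : 0 ≤ 1 - (1 - exp (-t)) * p := by nlinarith [exp_pos (-t)]
  have hmgf : ∫⁻ ω, ENNReal.ofReal (exp (-t * ∑ i ∈ range n, X i ω)) ∂μ
      ≤ ENNReal.ofReal (1 - (1 - exp (-t)) * p) ^ n := by
    have := setLIntegral_history_exp_neg_mul_sum_le hX hval hp0 hp1 hcond ht (Nat.zero_le n) 0
    rwa [history_zero, Measure.restrict_univ, measure_univ, mul_one, Nat.sub_zero,
      ← range_eq_Ico] at this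
  have hsub : {ω | ∑ i ∈ range n, X i ω < k} ⊆
      {ω | ENNReal.ofReal (exp (-t * k)) ≤ ENNReal.ofReal (exp (-t * ∑ i ∈ range n, X i ω))} :=
    fun ω (hω : ∑ i ∈ range n, X i ω < k) =>
      ENNReal.ofReal_le_ofReal (exp_le_exp.mpr (by nlinarith))
  calc μ {ω | ∑ i ∈ range n, X i ω < k}
      ≤ (∫⁻ ω, ENNReal.ofReal (exp (-t * ∑ i ∈ range n, X i ω)) ∂μ) /
          ENNReal.ofReal (exp (-t * k)) :=
        (measure_mono hsub).trans <| meas_ge_le_lintegral_div (by fun_prop)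
          (ENNReal.ofReal_pos.mpr (exp_pos _)).ne' ENNReal.ofReal_ne_top
    _ ≤ ENNReal.ofReal (1 - (1 - exp (-t)) * p) ^ n / ENNReal.ofReal (exp (-t * k)) := by
        gcongr
    _ = ENNReal.ofReal (exp (t * k) * (1 - (1 - exp (-t)) * p) ^ n) := by
        rw [← ENNReal.ofReal_pow hq, ← ENNReal.ofReal_div_of_pos (exp_pos _), div_eq_mul_inv,
          ← exp_neg, neg_mul, neg_neg, mul_comm]

end Chernoff

theorem div_pow_mul_one_sub_add_div_pow_le {n k : ℕ} {p : ℝ} (hk0 : 0 < k) (hk : (k : ℝ) ≤ n * p)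
    (hp1 : p ≤ 1) :
    (n * p / k) ^ k * (1 - p + k / n) ^ n ≤ exp (-n * p) * (exp 1 * n * p / k) ^ k := by
  have hnp : (0 : ℝ) < n * p := (Nat.cast_pos.mpr hk0).trans_le hk
  have hn : (0 : ℝ) < n := by nlinarith
  have hp0 : 0 < p := pos_of_mul_pos_right hnp hn.le
  have hbase : 0 ≤ 1 - p + k / n := by linarith [show (0 : ℝ) ≤ k / n by positivity]
  have hpow : (1 - p + k / n) ^ n ≤ exp (k - n * p) := by
    calc (1 - p + k / n) ^ n ≤ exp (k / n - p) ^ n := by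
          gcongr; linarith [add_one_le_exp (k / n - p)]
      _ = exp (k - n * p) := by rw [← exp_nat_mul]; congr 1; field_simp
  calc (n * p / k) ^ k * (1 - p + k / n) ^ n ≤ (n * p / k) ^ k * exp (k - n * p) := by gcongr
    _ = exp (-n * p) * (exp 1 * n * p / k) ^ k := by
        rw [show exp 1 * n * p / k = exp 1 * (n * p / k) by ring, mul_pow, ← exp_nat_mul,
          mul_one, sub_eq_add_neg, exp_add, ← neg_mul]
        ring

theorem stmt1_general {Ω : Type*} [MeasurableSpace Ω] (μ : Measure Ω) [IsProbabilityMeasure μ]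
    (n : ℕ) (X : ℕ → Ω → ℝ) (hX : ∀ i, Measurable (X i))
    (hval : ∀ i ω, X i ω = 0 ∨ X i ω = 1)
    (p : ℝ) (hp1 : p ≤ 1)
    (hcond : ∀ i, i < n → ∀ x : ℕ → ℝ,
      ENNReal.ofReal p * μ {ω | ∀ j < i, X j ω = x j}
        ≤ μ ({ω | X i ω = 1} ∩ {ω | ∀ j < i, X j ω = x j}))
    (k : ℕ) (hk : (k : ℝ) ≤ n * p) :
    μ {ω | ∑ i ∈ Finset.range n, X i ω < (k : ℝ)}
      ≤ ENNReal.ofReal (Real.exp (-(n : ℝ) * p) * (Real.exp 1 * n * p / k) ^ k) := by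
  rcases k.eq_zero_or_pos with rfl | hk0
  · have hempty : {ω | ∑ i ∈ range n, X i ω < ((0 : ℕ) : ℝ)} = ∅ := by
      ext ω
      simp only [Set.mem_ofPred_eq, Nat.cast_zero, Set.mem_empty_iff_false, iff_false, not_lt]
      exact sum_nonneg fun i _ => (hval i ω).elim (fun h => h.ge) fun h => h ▸ zero_le_one
    rw [hempty, measure_empty]
    exact zero_le
  have hnp : (0 : ℝ) < n * p := (Nat.cast_pos.mpr hk0).trans_le hk
  have hn : (0 : ℝ) < n := by nlinarith
  have hp0 : 0 < p := pos_of_mul_pos_right hnp hn.le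
  have hratio : 1 ≤ n * p / k := (one_le_div (Nat.cast_pos.mpr hk0)).mpr hk
  have hexp : exp (log (n * p / k)) = n * p / k := exp_log (by linarith)
  have hq : 1 - (1 - exp (-log (n * p / k))) * p = 1 - p + k / n := by
    rw [exp_neg, hexp]; field_simp; ring
  refine (measure_sum_lt_le_ofReal_exp_mul hX hval hp0.le hp1 hcond (log_nonneg hratio) k).trans
    (ENNReal.ofReal_le_ofReal ?_)
  rw [hq, mul_comm (log _), exp_nat_mul, hexp]
  exact div_pow_mul_one_sub_add_div_pow_le hk0 hk hp1

/-- Extension of the Chernoff lower-tail bound to sequentially dependent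
{0,1}-valued random variables: if the conditional probability that
`X (i+1) = 1` given any history of values of `X 0, ..., X i` is at least `p`,
then for any integer `k ≤ n p`, `P(∑ X i < k) ≤ e^{-np} (e n p / k)^k`. -/
theorem stmt1 {Ω : Type*} [MeasurableSpace Ω] (μ : Measure Ω) [IsProbabilityMeasure μ]
    (n : ℕ) (X : ℕ → Ω → ℝ) (hX : ∀ i, Measurable (X i))
    (hval : ∀ i ω, X i ω = 0 ∨ X i ω = 1)
    (p : ℝ) (hp0 : 0 < p) (hp1 : p ≤ 1)
    (hcond : ∀ i, i < n → ∀ x : ℕ → ℝ,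
      ENNReal.ofReal p * μ {ω | ∀ j < i, X j ω = x j}
        ≤ μ ({ω | X i ω = 1} ∩ {ω | ∀ j < i, X j ω = x j}))
    (k : ℕ) (hk : (k : ℝ) ≤ n * p) :
    μ {ω | ∑ i ∈ Finset.range n, X i ω < (k : ℝ)}
      ≤ ENNReal.ofReal (Real.exp (-(n : ℝ) * p) * (Real.exp 1 * n * p / k) ^ k) :=
  stmt1_general μ n X hX hval p hp1 hcond k hk
end

section
/- Let (Δ_t)_{t=1}^T be a sequence of nonnegative reals, γ ∈ (0,1), β ∈ (γ^{d+2}, 1), and a, b ≥ 0 and t_c ≥ 1 be constants such that: (i) Δ_t ≤ a for all t < t_c; and (ii) Δ_t ≤ b ((1-β) t)^{-1/(d+2)} + γ max_{βt ≤ i < t} Δ_i for all t_c ≤ t ≤ T. Define C = max{ t_c^{1/(d+2)} a, b (1-β)^{-1/(d+2)} / (1 - γ β^{-1/(d+2)}) }. Then Δ_t ≤ C t^{-1/(d+2)} for all 1 ≤ t ≤ T. -/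
/-!
Write `K = γ β^{-1/(d+2)}`, which is `< 1` precisely because `γ^{d+2} < β`. The constant `C` is
chosen so that `C t_c^{-1/(d+2)} ≥ a` and `b (1-β)^{-1/(d+2)} + K C ≤ C`. By strong induction on
`t`: below `t_c` the bound is the initial one, since `t^{-1/(d+2)}` decreases; from `t_c` on, every
index in the window `[βt, t)` satisfies `i ≥ βt`, so the window maximum is at most
`C (βt)^{-1/(d+2)} = C β^{-1/(d+2)} t^{-1/(d+2)}`, and the recursion gives
`Δ_t ≤ (b (1-β)^{-1/(d+2)} + K C) t^{-1/(d+2)} ≤ C t^{-1/(d+2)}`.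
-/

open Real

theorem mul_rpow_neg_one_div_lt_one {γ β : ℝ} {n : ℕ} (hn : n ≠ 0) (hγ : 0 ≤ γ) (h : γ ^ n < β) :
    γ * β ^ (-1 / (n : ℝ)) < 1 := by
  have hβ : 0 < β := (pow_nonneg hγ n).trans_lt h
  have hγβ : γ < β ^ (n : ℝ)⁻¹ :=
    (lt_rpow_inv_iff_of_pos hγ hβ.le (by positivity)).mpr (by rwa [rpow_natCast])
  rw [neg_div, one_div, rpow_neg hβ.le]
  exact (mul_inv_lt_iff₀ (by positivity)).mpr (by rwa [one_mul])

section WindowedRecursion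

variable {Δ : ℕ → ℝ} {r β C : ℝ}

theorem sSup_window_le_mul_rpow {t : ℕ} (hr : r ≤ 0) (hC : 0 ≤ C) (hβt : 0 < β * t)
    (hbound : ∀ i : ℕ, β * t ≤ i → i < t → Δ i ≤ C * (i : ℝ) ^ r) :
    sSup {x : ℝ | ∃ i : ℕ, β * (t : ℝ) ≤ (i : ℝ) ∧ i < t ∧ x = Δ i} ≤ C * (β * t) ^ r := by
  -- `0 ≤ C` is needed because an empty window has `sSup = 0`.
  refine Real.sSup_le ?_ (by positivity)
  rintro x ⟨i, hβi, hit, rfl⟩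
  calc Δ i ≤ C * (i : ℝ) ^ r := hbound i hβi hit
    _ ≤ C * (β * t) ^ r := mul_le_mul_of_nonneg_left (rpow_le_rpow_of_nonpos hβt hβi hr) hC

theorem le_mul_rpow_of_windowed_recursion {T : ℕ} {γ a b tc : ℝ} (hr : r ≤ 0) (hγ : 0 ≤ γ)
    (hβ0 : 0 < β) (hβ1 : β ≤ 1) (hC : 0 ≤ C) (hCa : a ≤ C * tc ^ r)
    (hCb : b * (1 - β) ^ r + γ * (β ^ r * C) ≤ C)
    (h1 : ∀ t : ℕ, 1 ≤ t → t ≤ T → (t : ℝ) < tc → Δ t ≤ a)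
    (h2 : ∀ t : ℕ, t ≤ T → tc ≤ (t : ℝ) →
      Δ t ≤ b * ((1 - β) * t) ^ r
        + γ * sSup {x : ℝ | ∃ i : ℕ, β * (t : ℝ) ≤ (i : ℝ) ∧ i < t ∧ x = Δ i}) :
    ∀ t : ℕ, 1 ≤ t → t ≤ T → Δ t ≤ C * (t : ℝ) ^ r := by
  intro t
  induction t using Nat.strong_induction_on with
  | _ t ih =>
    intro ht1 htT
    have ht0 : (0 : ℝ) < t := by exact_mod_cast ht1
    rcases lt_or_ge (t : ℝ) tc with htc | htc
    · calc Δ t ≤ a := h1 t ht1 htT htc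
        _ ≤ C * tc ^ r := hCa
        _ ≤ C * (t : ℝ) ^ r :=
          mul_le_mul_of_nonneg_left (rpow_le_rpow_of_nonpos ht0 htc.le hr) hC
    · have hβt : 0 < β * t := by positivity
      have hwindow := sSup_window_le_mul_rpow hr hC hβt fun i hβi hit =>
        ih i hit (Nat.cast_pos.mp (hβt.trans_le hβi)) (hit.le.trans htT)
      calc Δ t ≤ b * ((1 - β) * t) ^ r
            + γ * sSup {x : ℝ | ∃ i : ℕ, β * (t : ℝ) ≤ (i : ℝ) ∧ i < t ∧ x = Δ i} := h2 t htT htc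
        _ ≤ b * ((1 - β) * t) ^ r + γ * (C * (β * t) ^ r) := by gcongr
        _ = (b * (1 - β) ^ r + γ * (β ^ r * C)) * (t : ℝ) ^ r := by
          rw [mul_rpow (by linarith) ht0.le, mul_rpow hβ0.le ht0.le]; ring
        _ ≤ C * (t : ℝ) ^ r := by gcongr

end WindowedRecursion

theorem stmt13_general (d T : ℕ)
    (γ β a b tc C : ℝ) (hγ : γ ∈ Set.Ioo (0:ℝ) 1)
    (hβ1 : γ ^ (d + 2) < β) (hβ2 : β < 1)
    (ha : 0 ≤ a) (htc : 1 ≤ tc)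
    (Δ : ℕ → ℝ)
    (h1 : ∀ t : ℕ, 1 ≤ t → t ≤ T → (t : ℝ) < tc → Δ t ≤ a)
    (h2 : ∀ t : ℕ, t ≤ T → tc ≤ (t : ℝ) →
      Δ t ≤ b * Real.rpow ((1 - β) * (t : ℝ)) (-1 / ((d : ℝ) + 2))
        + γ * sSup {x : ℝ | ∃ i : ℕ, β * (t : ℝ) ≤ (i : ℝ) ∧ i < t ∧ x = Δ i})
    (hC : C = max (Real.rpow tc (1 / ((d : ℝ) + 2)) * a)
        (b * Real.rpow (1 - β) (-1 / ((d : ℝ) + 2))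
          / (1 - γ * Real.rpow β (-1 / ((d : ℝ) + 2))))) :
    ∀ t : ℕ, 1 ≤ t → t ≤ T → Δ t ≤ C * Real.rpow (t : ℝ) (-1 / ((d : ℝ) + 2)) := by
  set r : ℝ := -1 / ((d : ℝ) + 2)
  have hr : r ≤ 0 := div_nonpos_of_nonpos_of_nonneg (by norm_num) (by positivity)
  have hβ0 : 0 < β := (pow_pos hγ.1 _).trans hβ1
  have hK : γ * β ^ r < 1 := by
    simpa using mul_rpow_neg_one_div_lt_one (by omega) hγ.1.le hβ1
  have hC_left : tc ^ (1 / ((d : ℝ) + 2)) * a ≤ C := hC ▸ le_max_left _ _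
  have hC_right : b * (1 - β) ^ r / (1 - γ * β ^ r) ≤ C := hC ▸ le_max_right _ _
  have hC0 : 0 ≤ C := le_trans (by positivity) hC_left
  have hCa : a ≤ C * tc ^ r := by
    calc a = tc ^ (1 / ((d : ℝ) + 2)) * a * tc ^ r := by
          rw [mul_right_comm, ← rpow_add (by linarith), show 1 / ((d : ℝ) + 2) + r = 0 by ring,
            rpow_zero, one_mul]
      _ ≤ C * tc ^ r := by gcongr
  have hCb : b * (1 - β) ^ r + γ * (β ^ r * C) ≤ C := by
    rw [div_le_iff₀ (by linarith)] at hC_right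
    linarith
  exact le_mul_rpow_of_windowed_recursion hr hγ.1.le hβ0 hβ2.le hC0 hCa hCb h1 h2

/-- Error-decay recursion for online nearest-neighbor Q-learning: if
`Δ_t ≤ a` for `t < t_c`, and for `t_c ≤ t ≤ T`,
`Δ_t ≤ b ((1-β) t)^{-1/(d+2)} + γ max_{βt ≤ i < t} Δ_i`,
then `Δ_t ≤ C t^{-1/(d+2)}` for all `1 ≤ t ≤ T`, where
`C = max{t_c^{1/(d+2)} a, b (1-β)^{-1/(d+2)} / (1 - γ β^{-1/(d+2)})}`. -/
theorem stmt13 (d T : ℕ) (hd : 1 ≤ d) (hT : 1 ≤ T)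
    (γ β a b tc C : ℝ) (hγ : γ ∈ Set.Ioo (0:ℝ) 1)
    (hβ1 : γ ^ (d + 2) < β) (hβ2 : β < 1)
    (ha : 0 ≤ a) (hb : 0 ≤ b) (htc : 1 ≤ tc)
    (Δ : ℕ → ℝ) (hΔnn : ∀ t : ℕ, 1 ≤ t → t ≤ T → 0 ≤ Δ t)
    (h1 : ∀ t : ℕ, 1 ≤ t → t ≤ T → (t : ℝ) < tc → Δ t ≤ a)
    (h2 : ∀ t : ℕ, t ≤ T → tc ≤ (t : ℝ) →
      Δ t ≤ b * Real.rpow ((1 - β) * (t : ℝ)) (-1 / ((d : ℝ) + 2))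
        + γ * sSup {x : ℝ | ∃ i : ℕ, β * (t : ℝ) ≤ (i : ℝ) ∧ i < t ∧ x = Δ i})
    (hC : C = max (Real.rpow tc (1 / ((d : ℝ) + 2)) * a)
        (b * Real.rpow (1 - β) (-1 / ((d : ℝ) + 2))
          / (1 - γ * Real.rpow β (-1 / ((d : ℝ) + 2))))) :
    ∀ t : ℕ, 1 ≤ t → t ≤ T → Δ t ≤ C * Real.rpow (t : ℝ) (-1 / ((d : ℝ) + 2)) :=
  stmt13_general d T γ β a b tc C hγ hβ1 hβ2 ha htc Δ h1 h2 hC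
end
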